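/- arXiv:1804.10453 — 4 statements merged into one kernel-verified Lean document; each statement's English description precedes it below -/
import Mathlib

section
/- Let u, v >= 0, h >= 1 be real numbers and let x be the largest real solution of x = u + v*(log x)^h. Then x < max{ 2^h * (u^{1/h} + v^{1/h} * log(h^h * v))^h , 2^h * (u^{1/h} + 2*e^2)^h }. -/
/-!
Put `a = u^(1/h)`, `b = h v^(1/h)` and `z = x^(1/h)`; then `h^h v = b^h`, so the bound reads
`(2 (a + N))^h` with `N = max (b log b) (2 e²)`. Superadditivity of `t ↦ t^h` turns
`x = u + v (log x)^h` into `z ≤ a + b log z`, which reduces everything to `h = 1`.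
There, if `z ≥ s := 2 (a + N)`, concavity of `log` at `s` and `b ≤ N ≤ s / 2` give
`b log z ≤ b log s + (z - s) / 2`, while `b log s < a + 2 N`; together these force `z < z`.
-/

open Real

theorem log_le_log_add_sub_div {x y : ℝ} (hx : 0 < x) (hy : 0 < y) :
    log y ≤ log x + (y - x) / x := by
  have h := log_le_sub_one_of_pos (div_pos hy hx)
  rw [log_div hy.ne' hx.ne'] at h
  rw [sub_div, div_self hx.ne']
  linarith

theorem seven_lt_exp_two : 7 < exp 2 := by
  have h := exp_one_gt_d9
  have : exp 2 = exp 1 * exp 1 := by rw [← exp_add]; norm_num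
  nlinarith

theorem le_max_mul_log_self {b : ℝ} (hb : 0 ≤ b) : b ≤ max (b * log b) (2 * exp 2) := by
  rcases le_or_gt b (2 * exp 2) with hb2 | hb2
  · exact le_max_of_le_right hb2
  · have : 1 < log b := by
      rw [lt_log_iff_exp_lt (by linarith [exp_pos 2])]
      linarith [exp_one_lt_d9, seven_lt_exp_two]
    exact le_max_of_le_left (by nlinarith)

theorem mul_log_two_mul_max_lt {b : ℝ} (hb : 0 ≤ b) :
    b * log (2 * max (b * log b) (2 * exp 2)) < 2 * max (b * log b) (2 * exp 2) := by
  set N := max (b * log b) (2 * exp 2)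
  have hlog2 := log_two_lt_d9
  have he := seven_lt_exp_two
  rcases le_or_gt b (exp 2) with hbe | hbe
  · have hN : 2 * exp 2 ≤ N := le_max_right _ _
    have htan := log_le_log_add_sub_div (x := 2 * (2 * exp 2)) (y := 2 * N) (by positivity)
      (by linarith)
    have hlog4e2 : log (2 * (2 * exp 2)) = log 2 + (log 2 + 2) := by
      rw [log_mul two_ne_zero (by positivity), log_mul two_ne_zero (exp_pos 2).ne', log_exp]
    rw [hlog4e2] at htan
    have hlogN : 0 ≤ log (2 * N) := log_nonneg (by linarith)
    calc b * log (2 * N) ≤ exp 2 * log (2 * N) := mul_le_mul_of_nonneg_right hbe hlogN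
      _ ≤ exp 2 * (log 2 + (log 2 + 2) + (2 * N - 2 * (2 * exp 2)) / (2 * (2 * exp 2))) :=
          mul_le_mul_of_nonneg_left htan (exp_pos 2).le
      _ = exp 2 * (2 * log 2 + 1) + N / 2 := by field_simp; ring
      _ < 2 * N := by nlinarith
  · have hb0 : 0 < b := (exp_pos 2).trans hbe
    have hlogb : 2 < log b := by rwa [lt_log_iff_exp_lt hb0]
    have hN : N = b * log b := max_eq_left (by nlinarith)
    have hloglog : log (log b) ≤ log b - 1 := log_le_sub_one_of_pos (by linarith)
    rw [hN, ← mul_assoc, log_mul (by positivity) (by linarith), log_mul two_ne_zero hb0.ne']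
    nlinarith

theorem lt_two_mul_add_max_of_le_add_mul_log {a b z : ℝ} (ha : 0 ≤ a) (hb : 0 ≤ b)
    (hz : z ≤ a + b * log z) : z < 2 * (a + max (b * log b) (2 * exp 2)) := by
  set N := max (b * log b) (2 * exp 2)
  set s := 2 * (a + N)
  have hN : 2 * exp 2 ≤ N := le_max_right _ _
  have hN0 : 0 < N := by linarith [exp_pos 2]
  have hs : 0 < s := by positivity
  by_contra! hsz
  have hbN : b ≤ N := le_max_mul_log_self hb
  have hlogz : log z ≤ log s + (z - s) / s := log_le_log_add_sub_div hs (hs.trans_le hsz)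
  have hlogs : log s ≤ log (2 * N) + a / N := by
    have := log_le_log_add_sub_div (by positivity : 0 < 2 * N) hs
    have hs' : (s - 2 * N) / (2 * N) = a / N := by field_simp; ring
    linarith
  have hba : b * (a / N) ≤ a := by
    calc b * (a / N) ≤ N * (a / N) := by gcongr
      _ = a := mul_div_cancel₀ a hN0.ne'
  have hbzs : b * ((z - s) / s) ≤ (z - s) / 2 := by
    rw [mul_div_assoc', div_le_div_iff₀ hs two_pos]
    nlinarith
  have : z < z :=
    calc z ≤ a + b * log z := hz
      _ ≤ a + b * (log (2 * N) + a / N) + b * ((z - s) / s) := by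
          nlinarith [mul_le_mul_of_nonneg_left hlogz hb, mul_le_mul_of_nonneg_left hlogs hb]
      _ ≤ a + b * log (2 * N) + a + (z - s) / 2 := by linarith [mul_add b (log (2 * N)) (a / N)]
      _ < s + (z - s) / 2 := by linarith [mul_log_two_mul_max_lt hb]
      _ ≤ z := by linarith
  exact lt_irrefl z this

theorem rpow_inv_le_add_mul_log_rpow_inv {u v h x : ℝ} (hu : 0 ≤ u) (hv : 0 ≤ v) (hh : 1 ≤ h)
    (hx1 : 1 ≤ x) (hx : x ≤ u + v * log x ^ h) :
    x ^ h⁻¹ ≤ u ^ h⁻¹ + h * v ^ h⁻¹ * log (x ^ h⁻¹) := by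
  have hh0 : 0 < h := by linarith
  have hlogx : 0 ≤ log x := log_nonneg hx1
  have hsum : x ≤ (u ^ h⁻¹ + v ^ h⁻¹ * log x) ^ h :=
    calc x ≤ u + v * log x ^ h := hx
      _ = (u ^ h⁻¹) ^ h + (v ^ h⁻¹ * log x) ^ h := by
          rw [mul_rpow (by positivity) hlogx, rpow_inv_rpow hu hh0.ne', rpow_inv_rpow hv hh0.ne']
      _ ≤ (u ^ h⁻¹ + v ^ h⁻¹ * log x) ^ h := add_rpow_le_rpow_add (by positivity) (by positivity) hh
  rw [log_rpow (by linarith), show h * v ^ h⁻¹ * (h⁻¹ * log x) = v ^ h⁻¹ * log x by field_simp]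
  rwa [rpow_inv_le_iff_of_pos (by linarith) (by positivity) hh0]

theorem lt_two_mul_add_max_rpow_of_le_add_mul_log_rpow {u v h x : ℝ} (hu : 0 ≤ u) (hv : 0 ≤ v)
    (hh : 1 ≤ h) (hx : x ≤ u + v * log x ^ h) :
    x < (2 * (u ^ h⁻¹ + max (h * v ^ h⁻¹ * log (h * v ^ h⁻¹)) (2 * exp 2))) ^ h := by
  have hs : 1 < 2 * (u ^ h⁻¹ + max (h * v ^ h⁻¹ * log (h * v ^ h⁻¹)) (2 * exp 2)) := by
    have := le_max_right (h * v ^ h⁻¹ * log (h * v ^ h⁻¹)) (2 * exp 2)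
    have := seven_lt_exp_two
    have : 0 ≤ u ^ h⁻¹ := by positivity
    linarith
  have hh0 : 0 < h := by linarith
  rcases le_or_gt x 1 with hx1 | hx1
  · exact hx1.trans_lt (one_lt_rpow hs hh0)
  rw [← rpow_inv_lt_iff_of_pos (by linarith) (by linarith) hh0]
  exact lt_two_mul_add_max_of_le_add_mul_log (by positivity) (by positivity)
    (rpow_inv_le_add_mul_log_rpow_inv hu hv hh hx1.le hx)

theorem rpow_inv_mul_log_rpow_mul {v h : ℝ} (hv : 0 ≤ v) (hh : 0 < h) :
    v ^ h⁻¹ * log (h ^ h * v) = h * v ^ h⁻¹ * log (h * v ^ h⁻¹) := by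
  rw [← rpow_inv_rpow hv hh.ne', ← mul_rpow hh.le (by positivity), rpow_inv_rpow hv hh.ne']
  rcases (rpow_nonneg hv h⁻¹).eq_or_lt with hc | hc
  · simp [← hc]
  · rw [log_rpow (by positivity)]; ring

theorem stmt_6_general (u v h x : ℝ) (hu : 0 ≤ u) (hv : 0 ≤ v) (hh : 1 ≤ h)
    (hx : x = u + v * Real.log x ^ h) :
    x < max ((2 : ℝ) ^ h * (u ^ (1 / h) + v ^ (1 / h) * Real.log (h ^ h * v)) ^ h)
        ((2 : ℝ) ^ h * (u ^ (1 / h) + 2 * Real.exp 2) ^ h) := by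
  have hx' := lt_two_mul_add_max_rpow_of_le_add_mul_log_rpow hu hv hh hx.le
  rw [one_div, rpow_inv_mul_log_rpow_mul hv (by positivity)]
  rcases max_cases (h * v ^ h⁻¹ * log (h * v ^ h⁻¹)) (2 * exp 2) with ⟨hN, hle⟩ | ⟨hN, -⟩
  · rw [hN] at hx'
    refine lt_max_of_lt_left ?_
    rwa [← mul_rpow zero_le_two (by linarith [exp_pos 2, rpow_nonneg hu h⁻¹])]
  · rw [hN] at hx'
    refine lt_max_of_lt_right ?_
    rwa [← mul_rpow zero_le_two (by positivity)]

/-- Lemma of Pethő and de Weger. -/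
theorem stmt_6 (u v h x : ℝ) (hu : 0 ≤ u) (hv : 0 ≤ v) (hh : 1 ≤ h)
    (hx : x = u + v * Real.log x ^ h)
    (hmax : ∀ y : ℝ, y = u + v * Real.log y ^ h → y ≤ x) :
    x < max ((2 : ℝ) ^ h * (u ^ (1 / h) + v ^ (1 / h) * Real.log (h ^ h * v)) ^ h)
        ((2 : ℝ) ^ h * (u ^ (1 / h) + 2 * Real.exp 2) ^ h) :=
  stmt_6_general u v h x hu hv hh hx
end

section
/- The real numbers 2, alpha = (1+sqrt(5))/2, and sqrt(5) are multiplicatively independent: if 2^a * alpha^b * sqrt(5)^c = 1 for integers a, b, c, then a = b = c = 0. -/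
open Zsqrtd in
lemma aux_five_nonsquare : ∀ n : ℤ, (5:ℤ) ≠ n * n := by
  intro n hn
  have h1 : n.natAbs * n.natAbs = 5 := by
    have h2 := Int.natAbs_mul_self (a := n)
    exact_mod_cast h2.trans hn.symm
  have hd : n.natAbs ∣ 5 := ⟨n.natAbs, h1.symm⟩
  have hle := Nat.le_of_dvd (by norm_num) hd
  interval_cases h : n.natAbs <;> omega

noncomputable abbrev auxToReal : (ℤ√5) →+* ℝ := Zsqrtd.toReal (by norm_num)

lemma aux_nat_exp {p1 q1 r1 p2 q2 r2 : ℕ}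
    (h : 2 ^ (2 * (p1 + q1)) * 5 ^ r1 = 2 ^ (2 * (p2 + q2)) * 5 ^ (r2:ℕ)) :
    p1 + q1 = p2 + q2 ∧ r1 = r2 := by
  have h2 : (2:ℕ).Prime := by norm_num
  have h5 : (5:ℕ).Prime := by norm_num
  have hne : (2 ^ (2 * (p1 + q1)) * 5 ^ r1 : ℕ) ≠ 0 := by positivity
  have hf := congrArg Nat.factorization h
  have hfa2 := congrArg (fun f => f 2) hf
  have hfa5 := congrArg (fun f => f 5) hf
  simp [Nat.factorization_mul, Nat.factorization_pow, Nat.Prime.factorization, h2, h5] at hfa2 hfa5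
  omega

/-- 2, the golden ratio and √5 are multiplicatively independent. -/
theorem stmt_9 (a b c : ℤ)
    (h : (2 : ℝ) ^ a * ((1 + Real.sqrt 5) / 2) ^ b * Real.sqrt 5 ^ c = 1) :
    a = 0 ∧ b = 0 ∧ c = 0 := by
  have hs5 : (0:ℝ) < Real.sqrt 5 := Real.sqrt_pos.mpr (by norm_num)
  have hz : (0:ℝ) < 1 + Real.sqrt 5 := by linarith
  have h2 : (2:ℝ) ≠ 0 := by norm_num
  -- rewrite φ^b = (1+√5)^b * 2^(-b)
  have hphi : ((1 + Real.sqrt 5) / 2 : ℝ) ^ b = (1 + Real.sqrt 5) ^ b * 2 ^ (-b) := by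
    rw [div_zpow, zpow_neg]
    ring
  have h' : (2:ℝ) ^ (a - b) * (1 + Real.sqrt 5) ^ b * Real.sqrt 5 ^ c = 1 := by
    rw [sub_eq_add_neg, zpow_add₀ h2]
    calc (2:ℝ) ^ a * 2 ^ (-b) * (1 + Real.sqrt 5) ^ b * Real.sqrt 5 ^ c
        = 2 ^ a * ((1 + Real.sqrt 5) ^ b * 2 ^ (-b)) * Real.sqrt 5 ^ c := by ring
      _ = 1 := by rw [← hphi]; exact h
  set a' := a - b with ha'
  -- natural number exponents
  set p1 := a'.toNat; set p2 := (-a').toNat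
  set q1 := b.toNat; set q2 := (-b).toNat
  set r1 := c.toNat; set r2 := (-c).toNat
  have key : ∀ (x : ℝ), x ≠ 0 → ∀ n : ℤ, x ^ (n.toNat) = x ^ n * x ^ ((-n).toNat) := by
    intro x hx n
    rw [← zpow_natCast x n.toNat, ← zpow_natCast x (-n).toNat, ← zpow_add₀ hx]
    congr 1
    omega
  have hreal : (2:ℝ) ^ p1 * (1 + Real.sqrt 5) ^ q1 * Real.sqrt 5 ^ r1
      = 2 ^ p2 * (1 + Real.sqrt 5) ^ q2 * Real.sqrt 5 ^ r2 := by
    rw [key 2 h2 a', key (1 + Real.sqrt 5) (ne_of_gt hz) b, key (Real.sqrt 5) (ne_of_gt hs5) c]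
    calc (2:ℝ) ^ a' * 2 ^ p2 * ((1 + Real.sqrt 5) ^ b * (1 + Real.sqrt 5) ^ q2)
          * (Real.sqrt 5 ^ c * Real.sqrt 5 ^ r2)
        = ((2:ℝ) ^ a' * (1 + Real.sqrt 5) ^ b * Real.sqrt 5 ^ c)
            * (2 ^ p2 * (1 + Real.sqrt 5) ^ q2 * Real.sqrt 5 ^ r2) := by ring
      _ = _ := by rw [h']; ring
  -- move to ℤ√5
  set z : ℤ√5 := ⟨1, 1⟩ with hzdef
  set s : ℤ√5 := ⟨0, 1⟩ with hsdef
  have him : ∀ (x : ℤ√5), auxToReal x = x.re + x.im * Real.sqrt 5 := by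
    intro x; simp [auxToReal, Zsqrtd.toReal]
  have hX : auxToReal (2 ^ p1 * z ^ q1 * s ^ r1) = auxToReal (2 ^ p2 * z ^ q2 * s ^ r2) := by
    have e1 : auxToReal z = 1 + Real.sqrt 5 := by rw [him]; norm_num
    have e2 : auxToReal s = Real.sqrt 5 := by rw [him]; norm_num
    have e3 : auxToReal 2 = 2 := by norm_num
    simp only [map_mul, map_pow, e1, e2, e3]
    exact hreal
  have hXY : (2 ^ p1 * z ^ q1 * s ^ r1 : ℤ√5) = 2 ^ p2 * z ^ q2 * s ^ r2 :=
    Zsqrtd.toReal_injective (by norm_num) aux_five_nonsquare hX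
  -- take norms
  have hnorm := congrArg Zsqrtd.norm hXY
  have nz : Zsqrtd.norm z = -4 := by simp [Zsqrtd.norm_def, hzdef]
  have ns : Zsqrtd.norm s = -5 := by simp [Zsqrtd.norm_def, hsdef]
  have n2 : Zsqrtd.norm (2 : ℤ√5) = 4 := by
    have := Zsqrtd.norm_intCast (d := 5) 2
    norm_num at this
    exact_mod_cast this
  have hnormpow : ∀ (x : ℤ√5) (n : ℕ), Zsqrtd.norm (x ^ n) = (Zsqrtd.norm x) ^ n := by
    intro x n
    exact map_pow (Zsqrtd.normMonoidHom) x n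
  rw [Zsqrtd.norm_mul, Zsqrtd.norm_mul, Zsqrtd.norm_mul, Zsqrtd.norm_mul,
    hnormpow, hnormpow, hnormpow, hnormpow, hnormpow, hnormpow, nz, ns, n2] at hnorm
  -- take natAbs
  have habs := congrArg Int.natAbs hnorm
  simp only [Int.natAbs_mul, Int.natAbs_pow] at habs
  norm_num at habs
  have habs' : 2 ^ (2 * (p1 + q1)) * 5 ^ r1 = 2 ^ (2 * (p2 + q2)) * 5 ^ r2 := by
    calc 2 ^ (2 * (p1 + q1)) * 5 ^ r1 = 4 ^ p1 * 4 ^ q1 * 5 ^ r1 := by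
          rw [pow_mul]; norm_num; ring
      _ = 4 ^ p2 * 4 ^ q2 * 5 ^ r2 := habs
      _ = 2 ^ (2 * (p2 + q2)) * 5 ^ r2 := by rw [pow_mul]; norm_num; ring
  obtain ⟨hpq, hr⟩ := aux_nat_exp habs'
  have hc : c = 0 := by omega
  have ha : a = 0 := by omega
  refine ⟨ha, ?_, hc⟩
  -- now φ^b = 1 with φ > 1
  rw [ha, hc] at h
  simp only [zpow_zero, one_mul, mul_one] at h
  have hgt : (1:ℝ) < (1 + Real.sqrt 5) / 2 := by
    have : (2:ℝ) < Real.sqrt 5 := by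
      nlinarith [Real.sq_sqrt (by norm_num : (5:ℝ) ≥ 0), hs5]
    linarith
  have := (zpow_right_strictMono₀ hgt).injective (a₁ := b) (a₂ := 0)
  simp only [zpow_zero] at this
  exact this h
end

section
/- The only integers n with H_Z(n) + H_b(n) <= 2 are n = 1, 2, 8, where H_Z(n) is the number of non-zero digits in the Zeckendorf expansion of n and H_b(n) is the number of non-zero binary digits of n. -/
def F : ℕ → ℕ
  | 0 => 1
  | 1 => 2
  | n + 2 => F (n + 1) + F n

lemma F_facts : (F 24 % 48 = 1 ∧ F 25 % 48 = 2) ∧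
    ∀ j ≤ 25, F j % 48 ≠ 4 ∧ F j % 48 ≠ 16 ∧ F j % 48 ≠ 32 := by
  have h : ∀ n, F (n + 2) % 48 = (F (n + 1) % 48 + F n % 48) % 48 := by
    intro n
    show (F (n + 1) + F n) % 48 = _
    omega
  have v0 : F 0 % 48 = 1 := rfl
  have v1 : F 1 % 48 = 2 := rfl
  have v2 : F 2 % 48 = 3 := by have := h 0; norm_num at this; omega
  have v3 : F 3 % 48 = 5 := by have := h 1; norm_num at this; omega
  have v4 : F 4 % 48 = 8 := by have := h 2; norm_num at this; omega
  have v5 : F 5 % 48 = 13 := by have := h 3; norm_num at this; omega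
  have v6 : F 6 % 48 = 21 := by have := h 4; norm_num at this; omega
  have v7 : F 7 % 48 = 34 := by have := h 5; norm_num at this; omega
  have v8 : F 8 % 48 = 7 := by have := h 6; norm_num at this; omega
  have v9 : F 9 % 48 = 41 := by have := h 7; norm_num at this; omega
  have v10 : F 10 % 48 = 0 := by have := h 8; norm_num at this; omega
  have v11 : F 11 % 48 = 41 := by have := h 9; norm_num at this; omega
  have v12 : F 12 % 48 = 41 := by have := h 10; norm_num at this; omega
  have v13 : F 13 % 48 = 34 := by have := h 11; norm_num at this; omega
  have v14 : F 14 % 48 = 27 := by have := h 12; norm_num at this; omega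
  have v15 : F 15 % 48 = 13 := by have := h 13; norm_num at this; omega
  have v16 : F 16 % 48 = 40 := by have := h 14; norm_num at this; omega
  have v17 : F 17 % 48 = 5 := by have := h 15; norm_num at this; omega
  have v18 : F 18 % 48 = 45 := by have := h 16; norm_num at this; omega
  have v19 : F 19 % 48 = 2 := by have := h 17; norm_num at this; omega
  have v20 : F 20 % 48 = 47 := by have := h 18; norm_num at this; omega
  have v21 : F 21 % 48 = 1 := by have := h 19; norm_num at this; omega
  have v22 : F 22 % 48 = 0 := by have := h 20; norm_num at this; omega
  have v23 : F 23 % 48 = 1 := by have := h 21; norm_num at this; omega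
  have v24 : F 24 % 48 = 1 := by have := h 22; norm_num at this; omega
  have v25 : F 25 % 48 = 2 := by have := h 23; norm_num at this; omega
  refine ⟨⟨v24, v25⟩, ?_⟩
  intro j hj
  interval_cases j <;> omega

lemma F_period (j : ℕ) : F (j + 24) % 48 = F j % 48 := by
  induction j using Nat.strong_induction_on with
  | _ j ih =>
    match j with
    | 0 =>
      have h1 := F_facts.1.1
      have h2 : F 0 % 48 = 1 := rfl
      norm_num
      omega
    | 1 =>
      have h1 := F_facts.1.2
      have h2 : F 1 % 48 = 2 := rfl
      norm_num
      omega
    | j + 2 =>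
      have h1 := ih (j + 1) (by omega)
      have h0 := ih j (by omega)
      show F ((j + 24) + 2) % 48 = F (j + 2) % 48
      show (F ((j + 24) + 1) + F (j + 24)) % 48 = (F (j + 1) + F j) % 48
      rw [show j + 24 + 1 = j + 1 + 24 from by omega]
      omega

lemma F_mod (j : ℕ) : F j % 48 = F (j % 24) % 48 := by
  induction j using Nat.strong_induction_on with
  | _ j ih =>
    by_cases h : j < 24
    · rw [Nat.mod_eq_of_lt h]
    · have e : j - 24 + 24 = j := by omega
      calc F j % 48 = F ((j - 24) + 24) % 48 := by rw [e]
        _ = F (j - 24) % 48 := F_period _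
        _ = F ((j - 24) % 24) % 48 := ih _ (by omega)
        _ = F (j % 24) % 48 := by congr 2; omega

lemma F_mod_ne (j : ℕ) : F j % 48 ≠ 4 ∧ F j % 48 ≠ 16 ∧ F j % 48 ≠ 32 := by
  rw [F_mod]
  exact F_facts.2 _ (by omega)

lemma pow_mod (k : ℕ) : 2 ^ (k + 4) % 48 = 16 ∨ 2 ^ (k + 4) % 48 = 32 := by
  induction k with
  | zero => decide
  | succ m ih =>
    rw [pow_succ]
    rcases ih with h | h <;> [right; left] <;> omega

lemma digits_sum_zero {m : ℕ} (h : (Nat.digits 2 m).sum = 0) : m = 0 := by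
  induction m using Nat.strong_induction_on with
  | _ m ih =>
    rcases Nat.eq_zero_or_pos m with rfl | hm
    · rfl
    · rw [Nat.digits_def' (by norm_num) hm, List.sum_cons] at h
      have h2 : m / 2 = 0 := ih (m / 2) (by omega) (by omega)
      omega

lemma digits_sum_one {m : ℕ} (h : (Nat.digits 2 m).sum = 1) : ∃ k, m = 2 ^ k := by
  induction m using Nat.strong_induction_on with
  | _ m ih =>
    rcases Nat.eq_zero_or_pos m with rfl | hm
    · simp at h
    · rw [Nat.digits_def' (by norm_num) hm, List.sum_cons] at h
      rcases Nat.mod_two_eq_zero_or_one m with h2 | h2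
      · rw [h2, Nat.zero_add] at h
        obtain ⟨k, hk⟩ := ih (m / 2) (by omega) h
        exact ⟨k + 1, by rw [pow_succ, ← hk]; omega⟩
      · rw [h2] at h
        have : m / 2 = 0 := digits_sum_zero (by omega)
        exact ⟨0, by omega⟩

/-- The only positive integers n with H_Z(n) + H_b(n) ≤ 2 are 1, 2 and 8.
The Zeckendorf Hamming weight H_Z(n) is the length of the (unique) Zeckendorf
expansion of n; the binary Hamming weight is (Nat.digits 2 n).sum. -/
theorem stmt_14 (n : ℕ) (hn : 0 < n) :
    (∃ ns : List ℕ, ns.Chain' (fun x y => y + 1 < x) ∧ n = (ns.map F).sum ∧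
        ns.length + (Nat.digits 2 n).sum ≤ 2) ↔
      n ∈ ({1, 2, 8} : Set ℕ) := by
  simp only [Set.mem_insert_iff, Set.mem_singleton_iff]
  constructor
  · rintro ⟨ns, _, hsum, hle⟩
    have hd1 : 1 ≤ (Nat.digits 2 n).sum := by
      by_contra h
      exact hn.ne' (digits_sum_zero (by omega))
    have hlen : ns.length ≤ 1 := by omega
    match ns, hsum with
    | [], hsum => simp at hsum; omega
    | [j], hsum =>
      simp only [List.map_cons, List.map_nil, List.sum_cons, List.sum_nil,
        Nat.add_zero] at hsum
      have hds : (Nat.digits 2 n).sum = 1 := by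
        simp only [List.length_cons, List.length_nil] at hle; omega
      obtain ⟨k, hk⟩ := digits_sum_one hds
      have hFne := F_mod_ne j
      match k with
      | 0 => left; simpa using hk
      | 1 => right; left; simpa using hk
      | 2 =>
        exfalso
        norm_num at hk
        rw [hsum] at hk
        omega
      | 3 => right; right; simpa using hk
      | k + 4 =>
        exfalso
        rcases pow_mod k with h | h <;> rw [hsum] at hk <;> omega
    | a :: b :: l, _ => simp at hlen
  · rintro (rfl | rfl | rfl)
    · exact ⟨[0], List.isChain_singleton _, by norm_num [F], by norm_num⟩
    · exact ⟨[1], List.isChain_singleton _, by norm_num [F], by norm_num⟩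
    · exact ⟨[4], List.isChain_singleton _, by norm_num [F], by norm_num⟩
end

section
/- Baker–Davenport reduction lemma: Let M be a positive integer, tau an irrational real number, and p/q a convergent of the continued fraction of tau with q > 6M. Let A, B, mu be reals with A > 0 and B > 1, and set epsilon = ||mu*q|| - M*||tau*q||, where ||x|| denotes the distance from x to the nearest integer. If epsilon > 0, then there is no solution in positive integers n, m, k of 0 < |n*tau - m + mu| < A*B^{-k} with n <= M and k >= log(A*q/epsilon)/log B. -/
/-- Baker–Davenport reduction lemma (Bravo et al.). Here ‖x‖ is formalised as
|x - round x|, the distance from x to the nearest integer, and p/q is a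
convergent of the continued fraction expansion of τ. -/
theorem stmt_18 (M : ℕ) (hM : 0 < M) (τ : ℝ) (hτ : Irrational τ)
    (p : ℤ) (q : ℕ) (hq : 6 * M < q)
    (hconv : ∃ j : ℕ, (GenContFract.of τ).nums j = (p : ℝ) ∧
      (GenContFract.of τ).dens j = (q : ℝ))
    (A B μ : ℝ) (hA : 0 < A) (hB : 1 < B)
    (ε : ℝ) (hε : ε = |μ * q - round (μ * q)| - M * |τ * q - round (τ * q)|)
    (hεpos : 0 < ε) :
    ¬ ∃ n m k : ℕ, 0 < n ∧ 0 < m ∧ 0 < k ∧ n ≤ M ∧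
      Real.log (A * q / ε) / Real.log B ≤ (k : ℝ) ∧
      0 < |(n : ℝ) * τ - m + μ| ∧ |(n : ℝ) * τ - m + μ| < A * B ^ (-(k : ℤ)) := by
  rintro ⟨n, m, k, hn, hm, hk, hnM, hklog, hpos, hlt⟩
  have hq0 : (0 : ℝ) < q := by
    have : 0 < q := lt_of_le_of_lt (Nat.zero_le _) hq
    exact_mod_cast this
  have hB0 : (0 : ℝ) < B := lt_trans one_pos hB
  have hBk : (0 : ℝ) < B ^ (k : ℕ) := pow_pos hB0 k
  -- Step 1: A * B^(-k) ≤ ε / q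
  have hAq : (0 : ℝ) < A * q / ε := div_pos (mul_pos hA hq0) hεpos
  have hlogB : 0 < Real.log B := Real.log_pos hB
  have h1 : Real.log (A * q / ε) ≤ (k : ℝ) * Real.log B := by
    rw [div_le_iff₀ hlogB] at hklog
    linarith
  have h2 : A * q / ε ≤ B ^ (k : ℕ) := by
    have := Real.log_le_log_iff hAq hBk
    rw [← this, Real.log_pow]
    exact_mod_cast h1
  have hstep1 : A * B ^ (-(k : ℤ)) ≤ ε / q := by
    rw [zpow_neg, zpow_natCast]
    rw [div_le_iff₀ hεpos] at h2
    rw [mul_inv_le_iff₀ hBk, div_mul_eq_mul_div, le_div_iff₀ hq0]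
    nlinarith
  -- Step 2: q * |δ| < ε
  set δ : ℝ := (n : ℝ) * τ - m + μ with hδ
  have hstep2 : (q : ℝ) * |δ| < ε := by
    have := lt_of_lt_of_le hlt hstep1
    rw [lt_div_iff₀ hq0] at this
    linarith
  -- Step 3: ε ≤ q * |δ|
  set r : ℤ := round (τ * q) with hr
  have key : |μ * q - round (μ * q)| ≤ |μ * q - ((m : ℤ) * q - n * r : ℤ)| :=
    round_le (μ * q) _
  have heq : μ * q - ((m : ℤ) * q - n * r : ℤ) = q * δ - (n : ℝ) * (τ * q - r) := by
    push_cast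
    ring
  have hbound : |μ * q - ((m : ℤ) * q - n * r : ℤ)| ≤ q * |δ| + M * |τ * q - r| := by
    rw [heq]
    calc |q * δ - (n : ℝ) * (τ * q - r)| ≤ |q * δ| + |(n : ℝ) * (τ * q - r)| :=
          abs_sub _ _
      _ = q * |δ| + (n : ℝ) * |τ * q - r| := by
          rw [abs_mul, abs_mul, abs_of_pos hq0, abs_of_nonneg (by positivity : (0:ℝ) ≤ (n:ℝ))]
      _ ≤ q * |δ| + M * |τ * q - r| := by
          have : (n : ℝ) ≤ M := by exact_mod_cast hnM
          nlinarith [abs_nonneg (τ * q - r)]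
  have hstep3 : ε ≤ q * |δ| := by
    rw [hε]
    have := le_trans key hbound
    linarith
  linarith
end
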